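/- Let Φ be an irreducible reduced root system and β a positive short root. Then the length of the reflection s_β satisfies l(s_β) = 2·ht(β) − 1, where ht(β) is the height of β with respect to the simple roots. -/

import Mathlib

open scoped RealInnerProductSpace

variable {V : Type*} [NormedAddCommGroup V] [InnerProductSpace ℝ V]

/-- An irreducible reduced (crystallographic) root system in a real inner product space. -/
structure IsIrredRootSystem (Φ : Set V) : Prop where
  finite : Φ.Finite
  nonempty : Φ.Nonempty
  nonzero : (0 : V) ∉ Φ
  spanning : Submodule.span ℝ Φ = ⊤
  reflect_mem : ∀ α ∈ Φ, ∀ β ∈ Φ, β - (2 * ⟪α, β⟫ / ⟪α, α⟫) • α ∈ Φ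
  crystallographic : ∀ α ∈ Φ, ∀ β ∈ Φ, ∃ n : ℤ, 2 * ⟪α, β⟫ / ⟪α, α⟫ = (n : ℝ)
  reduced : ∀ α ∈ Φ, ∀ t : ℝ, t • α ∈ Φ → t = 1 ∨ t = -1
  irreducible : ∀ Φ₁ Φ₂ : Set V, Φ₁ ∪ Φ₂ = Φ →
    (∀ α ∈ Φ₁, ∀ β ∈ Φ₂, ⟪α, β⟫ = 0) → Φ₁ = ∅ ∨ Φ₂ = ∅

/-- `Δ` is a base (system of simple roots) for `Φ`: it is contained in `Φ`, linearly
independent, and every root is an integral combination of `Δ` with coefficients all of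
the same sign. -/
def IsBase (Φ : Set V) (Δ : Finset V) : Prop :=
  (Δ : Set V) ⊆ Φ ∧ LinearIndependent ℝ (fun a : Δ => (a : V)) ∧
    ∀ γ ∈ Φ, ∃ c : V → ℤ, γ = ∑ α ∈ Δ, (c α : ℝ) • α ∧
      ((∀ α ∈ Δ, 0 ≤ c α) ∨ (∀ α ∈ Δ, c α ≤ 0))

/-- The positive roots with respect to the base `Δ`. -/
def posRoots (Φ : Set V) (Δ : Finset V) : Set V :=
  {γ ∈ Φ | ∃ c : V → ℕ, γ = ∑ α ∈ Δ, (c α : ℝ) • α}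

/-- The coroot `γ^∨ = 2γ/(γ|γ)` of a root `γ`. -/
noncomputable def coroot (γ : V) : V := (2 / ⟪γ, γ⟫) • γ

/-- The set of reflections in the roots of `Φ`, as linear automorphisms of `V`. -/
def reflections (Φ : Set V) : Set (V ≃ₗ[ℝ] V) :=
  {w | ∃ α ∈ Φ, ∀ v, w v = v - (2 * ⟪α, v⟫ / ⟪α, α⟫) • α}

/-- The Weyl group of `Φ`: the group generated by the reflections in the roots. -/
def weylGroup (Φ : Set V) : Subgroup (V ≃ₗ[ℝ] V) := Subgroup.closure (reflections Φ)

/-- The simple reflections with respect to the base `Δ`. -/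
def simpleReflections (Δ : Finset V) : Set (V ≃ₗ[ℝ] V) :=
  {w | ∃ α ∈ Δ, ∀ v, w v = v - (2 * ⟪α, v⟫ / ⟪α, α⟫) • α}

/-- The length of `w` with respect to the simple reflections determined by `Δ`. -/
noncomputable def len (Δ : Finset V) (w : V ≃ₗ[ℝ] V) : ℕ :=
  sInf {n | ∃ L : List (V ≃ₗ[ℝ] V),
    (∀ s ∈ L, s ∈ simpleReflections Δ) ∧ L.length = n ∧ L.prod = w}

/-- `t` is the highest root of `Φ` with respect to the base `Δ`. -/
def IsHighestRoot (Φ : Set V) (Δ : Finset V) (t : V) : Prop :=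
  t ∈ Φ ∧ ∀ α ∈ Φ, ∃ c : V → ℕ, t - α = ∑ a ∈ Δ, (c a : ℝ) • a

/-! Irreducibility forces any two distinct squared root lengths to have ratio `2` or `3`, so there
are at most two root lengths and a short root `β` has minimal length. For a root `δ` of minimal
length and a simple root `a ≠ ±δ`, strict Cauchy–Schwarz puts the Cartan integer `⟨δ, a^∨⟩` in
`{-1, 0, 1}`. Hence, if `ht β > 1`, a simple root `a` with `⟨β, a^∨⟩ = 1` gives a short positive
root `s_a β = β - a` of height `ht β - 1` with `s_β = s_a s_{β - a} s_a`, so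
`l(s_β) ≤ 2 ht β - 1`. Conversely `ht δ + [δ < 0]` drops by at most one under each simple
reflection, and along a word for `s_β` it goes from `ht β` at `β` to `1 - ht β` at `s_β β = -β`. -/

noncomputable def reflectionIn (γ : V) : V ≃ₗ[ℝ] V :=
  LinearEquiv.ofInvolutive (Module.preReflection γ ((2 / ⟪γ, γ⟫) • innerₛₗ ℝ γ)) fun v => by
    rcases eq_or_ne γ 0 with rfl | hγ
    · simp [Module.preReflection_apply]
    · exact Module.involutive_preReflection (by simp [hγ]) v

theorem reflectionIn_apply (γ v : V) :
    reflectionIn γ v = v - (2 * ⟪γ, v⟫ / ⟪γ, γ⟫) • γ := by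
  simp [reflectionIn, Module.preReflection_apply, div_mul_eq_mul_div]

theorem reflectionIn_reflectionIn (γ v : V) : reflectionIn γ (reflectionIn γ v) = v :=
  (reflectionIn γ).apply_symm_apply v

theorem reflectionIn_self {γ : V} (hγ : γ ≠ 0) : reflectionIn γ γ = -γ := by
  rw [reflectionIn_apply, mul_div_assoc, div_self (by simpa using hγ), mul_one, two_smul,
    sub_add_cancel_left]

theorem inner_reflectionIn_left (γ v w : V) :
    ⟪reflectionIn γ v, w⟫ = ⟪v, reflectionIn γ w⟫ := by
  simp only [reflectionIn_apply, inner_sub_left, inner_sub_right, real_inner_smul_left,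
    real_inner_smul_right, real_inner_comm γ v]
  ring

theorem inner_reflectionIn_reflectionIn (γ v w : V) :
    ⟪reflectionIn γ v, reflectionIn γ w⟫ = ⟪v, w⟫ := by
  rw [inner_reflectionIn_left, reflectionIn_reflectionIn]

theorem reflectionIn_mul_reflectionIn_mul_reflectionIn (a γ : V) :
    reflectionIn a * reflectionIn γ * reflectionIn a = reflectionIn (reflectionIn a γ) := by
  ext v
  simp only [LinearEquiv.mul_apply, reflectionIn_apply γ, map_sub, map_smul,
    reflectionIn_reflectionIn, reflectionIn_apply (reflectionIn a γ),
    inner_reflectionIn_reflectionIn, ← inner_reflectionIn_left a γ v]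

namespace IsIrredRootSystem

variable {Φ : Set V}

theorem ne_zero (hΦ : IsIrredRootSystem Φ) {γ : V} (hγ : γ ∈ Φ) : γ ≠ 0 :=
  fun h => hΦ.nonzero (h ▸ hγ)

theorem inner_self_pos (hΦ : IsIrredRootSystem Φ) {γ : V} (hγ : γ ∈ Φ) : 0 < ⟪γ, γ⟫ :=
  real_inner_self_pos.mpr (hΦ.ne_zero hγ)

theorem reflectionIn_mem (hΦ : IsIrredRootSystem Φ) {a γ : V} (ha : a ∈ Φ) (hγ : γ ∈ Φ) :
    reflectionIn a γ ∈ Φ := by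
  rw [reflectionIn_apply]
  exact hΦ.reflect_mem a ha γ hγ

theorem inner_mul_inner_lt (hΦ : IsIrredRootSystem Φ) {x y : V} (hx : x ∈ Φ) (hy : y ∈ Φ)
    (h₁ : y ≠ x) (h₂ : y ≠ -x) : ⟪x, y⟫ * ⟪x, y⟫ < ⟪x, x⟫ * ⟪y, y⟫ := by
  refine (real_inner_mul_inner_self_le x y).lt_of_ne fun h => ?_
  have hnorm : ‖⟪x, y⟫‖ = ‖x‖ * ‖y‖ := by
    rw [Real.norm_eq_abs, ← abs_of_nonneg (by positivity : 0 ≤ ‖x‖ * ‖y‖),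
      ← sq_eq_sq_iff_abs_eq_abs]
    rw [real_inner_self_eq_norm_mul_norm, real_inner_self_eq_norm_mul_norm] at h
    linear_combination h
  obtain ⟨r, -, rfl⟩ := (norm_inner_eq_norm_iff (hΦ.ne_zero hx) (hΦ.ne_zero hy)).mp hnorm
  rcases hΦ.reduced x hx r hy with rfl | rfl
  · exact h₁ (one_smul ℝ x)
  · exact h₂ (neg_one_smul ℝ x)

theorem exists_int_pairing_abs_le_one (hΦ : IsIrredRootSystem Φ) {x u : V} (hx : x ∈ Φ)
    (hu : u ∈ Φ) (hle : ⟪x, x⟫ ≤ ⟪u, u⟫) (h₁ : x ≠ u) (h₂ : x ≠ -u) :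
    ∃ m : ℤ, 2 * ⟪u, x⟫ / ⟪u, u⟫ = m ∧ |m| ≤ 1 := by
  obtain ⟨m, hm⟩ := hΦ.crystallographic u hu x hx
  have hu₀ := hΦ.inner_self_pos hu
  have hmu : (m : ℝ) * ⟪u, u⟫ = 2 * ⟪u, x⟫ := by
    rw [← hm]
    field_simp
  have hcs := hΦ.inner_mul_inner_lt hu hx h₁ h₂
  have hsq : (m : ℝ) * m < 4 := by
    refine lt_of_mul_lt_mul_right (a := ⟪u, u⟫ * ⟪u, u⟫) ?_ (by positivity)
    calc (m : ℝ) * m * (⟪u, u⟫ * ⟪u, u⟫) = 4 * (⟪u, x⟫ * ⟪u, x⟫) := by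
          linear_combination (m * ⟪u, u⟫ + 2 * ⟪u, x⟫) * hmu
      _ < 4 * (⟪u, u⟫ * ⟪x, x⟫) := by linarith
      _ ≤ 4 * (⟪u, u⟫ * ⟪u, u⟫) := by gcongr
  have hsq' : m * m < 4 := by exact_mod_cast hsq
  exact ⟨m, hm, abs_le.mpr ⟨by nlinarith, by nlinarith⟩⟩

/-- The roots of a given length span a subspace that every root either lies in or is orthogonal
to, since the reflections permute them; irreducibility rules out the second alternative. -/
theorem exists_inner_self_eq_and_inner_ne_zero (hΦ : IsIrredRootSystem Φ) {α x : V}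
    (hα : α ∈ Φ) (hx : x ∈ Φ) : ∃ u ∈ Φ, ⟪u, u⟫ = ⟪α, α⟫ ∧ ⟪u, x⟫ ≠ 0 := by
  set O := {u ∈ Φ | ⟪u, u⟫ = ⟪α, α⟫}
  set S := Submodule.span ℝ O
  have hperp : ∀ g ∈ Φ, g ∉ S → ∀ u ∈ O, ⟪g, u⟫ = 0 := by
    intro g hg hgS u hu
    have hsu : reflectionIn g u ∈ O :=
      ⟨hΦ.reflectionIn_mem hg hu.1, by rw [inner_reflectionIn_reflectionIn]; exact hu.2⟩
    have hmem : (2 * ⟪g, u⟫ / ⟪g, g⟫) • g ∈ S := by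
      have := S.sub_mem (Submodule.subset_span hu) (Submodule.subset_span hsu)
      rwa [reflectionIn_apply, sub_sub_cancel] at this
    by_contra h
    exact hgS ((S.smul_mem_iff
      (div_ne_zero (mul_ne_zero two_ne_zero h) (hΦ.inner_self_pos hg).ne')).mp hmem)
  set Φ₁ := {g ∈ Φ | g ∈ S}
  set Φ₂ := {g ∈ Φ | ∀ u ∈ O, ⟪g, u⟫ = 0}
  have hunion : Φ₁ ∪ Φ₂ = Φ := by
    refine Set.Subset.antisymm (Set.union_subset (fun g hg => hg.1) fun g hg => hg.1) ?_
    intro g hg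
    by_cases hgS : g ∈ S
    exacts [Or.inl ⟨hg, hgS⟩, Or.inr ⟨hg, hperp g hg hgS⟩]
  have horth : ∀ g₁ ∈ Φ₁, ∀ g₂ ∈ Φ₂, ⟪g₁, g₂⟫ = 0 := by
    rintro g₁ ⟨-, hg₁⟩ g₂ ⟨-, hg₂⟩
    have hS : S ≤ (ℝ ∙ g₂)ᗮ := Submodule.span_le.mpr fun u hu =>
      Submodule.mem_orthogonal_singleton_iff_inner_right.mpr (hg₂ u hu)
    rw [real_inner_comm]
    exact Submodule.mem_orthogonal_singleton_iff_inner_right.mp (hS hg₁)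
  rcases hΦ.irreducible Φ₁ Φ₂ hunion horth with h | h
  · exact absurd (h ▸ ⟨hα, Submodule.subset_span ⟨hα, rfl⟩⟩ : α ∈ (∅ : Set V)) id
  · have hx₂ : x ∉ Φ₂ := h ▸ Set.notMem_empty x
    simp only [Φ₂, Set.mem_ofPred_eq, not_and, not_forall] at hx₂
    obtain ⟨u, hu, hxu⟩ := hx₂ hx
    exact ⟨u, hu.1, hu.2, by rwa [real_inner_comm]⟩

theorem two_mul_le_and_le_three_mul (hΦ : IsIrredRootSystem Φ) {x y : V} (hx : x ∈ Φ)
    (hy : y ∈ Φ) (hlt : ⟪x, x⟫ < ⟪y, y⟫) :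
    2 * ⟪x, x⟫ ≤ ⟪y, y⟫ ∧ ⟪y, y⟫ ≤ 3 * ⟪x, x⟫ := by
  obtain ⟨u, hu, huy, hux⟩ := hΦ.exists_inner_self_eq_and_inner_ne_zero hy hx
  rw [← huy] at hlt ⊢
  have hx₀ := hΦ.inner_self_pos hx
  have h₁ : x ≠ u := by rintro rfl; exact hlt.false
  have h₂ : x ≠ -u := by rintro rfl; simp at hlt
  obtain ⟨n, hn, hn1⟩ := hΦ.exists_int_pairing_abs_le_one hx hu hlt.le h₁ h₂
  obtain ⟨m, hm⟩ := hΦ.crystallographic x hx u hu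
  have hu₀ := hΦ.inner_self_pos hu
  have hn0 : n ≠ 0 := by
    rintro rfl
    simp [hux, hΦ.ne_zero hu] at hn
  have hn' : |(n : ℝ)| = 1 := by exact_mod_cast le_antisymm hn1 (Int.one_le_abs hn0)
  have hmx : (m : ℝ) * ⟪x, x⟫ = 2 * ⟪x, u⟫ := by rw [← hm]; field_simp
  have hnu : (n : ℝ) * ⟪u, u⟫ = 2 * ⟪x, u⟫ := by rw [← hn, real_inner_comm]; field_simp
  have hk : ((|m| : ℤ) : ℝ) * ⟪x, x⟫ = ⟪u, u⟫ := by
    calc ((|m| : ℤ) : ℝ) * ⟪x, x⟫ = |(m : ℝ) * ⟪x, x⟫| := by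
          rw [Int.cast_abs, abs_mul, abs_of_pos hx₀]
      _ = |(n : ℝ) * ⟪u, u⟫| := by rw [hmx, hnu]
      _ = ⟪u, u⟫ := by rw [abs_mul, hn', one_mul, abs_of_pos hu₀]
  have hcs := hΦ.inner_mul_inner_lt hx hu h₁.symm (by rintro rfl; simp at hlt)
  have hk1 : 1 < |m| := by
    have : (1 : ℝ) < ((|m| : ℤ) : ℝ) := by nlinarith
    exact_mod_cast this
  have hk4 : |m| < 4 := by
    have hsq : ((|m| : ℤ) : ℝ) * ((|m| : ℤ) : ℝ) = (m : ℝ) * m := by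
      rw [Int.cast_abs, abs_mul_abs_self]
    have : ((|m| : ℤ) : ℝ) < 4 := by
      refine lt_of_mul_lt_mul_right (a := ((|m| : ℤ) : ℝ) * ⟪x, x⟫ * ⟪x, x⟫) ?_ (by positivity)
      calc ((|m| : ℤ) : ℝ) * (((|m| : ℤ) : ℝ) * ⟪x, x⟫ * ⟪x, x⟫)
          = 4 * (⟪x, u⟫ * ⟪x, u⟫) := by linear_combination (m * ⟪x, x⟫ + 2 * ⟪x, u⟫) * hmx
              + ⟪x, x⟫ * ⟪x, x⟫ * hsq
        _ < 4 * (⟪x, x⟫ * ⟪u, u⟫) := by linarith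
        _ = 4 * (((|m| : ℤ) : ℝ) * ⟪x, x⟫ * ⟪x, x⟫) := by rw [← hk]; ring
    exact_mod_cast this
  have h2 : (2 : ℝ) ≤ ((|m| : ℤ) : ℝ) := by exact_mod_cast (by omega : (2 : ℤ) ≤ |m|)
  have h3 : ((|m| : ℤ) : ℝ) ≤ 3 := by exact_mod_cast (by omega : |m| ≤ 3)
  constructor <;> nlinarith

theorem inner_self_le_of_ne_isGreatest (hΦ : IsIrredRootSystem Φ) {r : ℝ}
    (hr : IsGreatest {x : ℝ | ∃ α ∈ Φ, x = ⟪α, α⟫} r) {β : V} (hβ : β ∈ Φ) (hβr : ⟪β, β⟫ ≠ r)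
    {a : V} (ha : a ∈ Φ) : ⟪β, β⟫ ≤ ⟪a, a⟫ := by
  obtain ⟨ρ, hρ, rfl⟩ := hr.1
  have hβρ : ⟪β, β⟫ < ⟪ρ, ρ⟫ := (hr.2 ⟨β, hβ, rfl⟩).lt_of_ne hβr
  by_contra! haβ
  linarith [(hΦ.two_mul_le_and_le_three_mul ha hβ haβ).1,
    (hΦ.two_mul_le_and_le_three_mul hβ hρ hβρ).1,
    (hΦ.two_mul_le_and_le_three_mul ha hρ (haβ.trans hβρ)).2, hΦ.inner_self_pos ha]

end IsIrredRootSystem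

theorem apply_sum_smul_of_forall_eq_one {f : V →ₗ[ℝ] ℝ} {Δ : Finset V} (hf : ∀ a ∈ Δ, f a = 1)
    (c : V → ℝ) : f (∑ a ∈ Δ, c a • a) = ∑ a ∈ Δ, c a := by
  simp only [map_sum, map_smul, smul_eq_mul]
  exact Finset.sum_congr rfl fun a ha => by rw [hf a ha, mul_one]

theorem exists_apply_eq_natCast_of_mem_posRoots {Φ : Set V} {Δ : Finset V} {f : V →ₗ[ℝ] ℝ}
    (hf : ∀ a ∈ Δ, f a = 1) {γ : V} (hγ : γ ∈ posRoots Φ Δ) : ∃ n : ℕ, f γ = n := by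
  obtain ⟨c, hc⟩ := hγ.2
  exact ⟨∑ a ∈ Δ, c a, by rw [hc, apply_sum_smul_of_forall_eq_one hf]; push_cast; rfl⟩

theorem exists_mem_inner_pos_of_mem_posRoots {Φ : Set V} {Δ : Finset V} {γ : V}
    (hγ : γ ∈ posRoots Φ Δ) (hγ₀ : γ ≠ 0) : ∃ a ∈ Δ, 0 < ⟪a, γ⟫ := by
  by_contra! h
  obtain ⟨c, hc⟩ := hγ.2
  have : ⟪γ, γ⟫ ≤ 0 := by
    nth_rewrite 1 [hc]
    rw [sum_inner]
    exact Finset.sum_nonpos fun a ha => by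
      rw [real_inner_smul_left]
      exact mul_nonpos_of_nonneg_of_nonpos (Nat.cast_nonneg _) (h a ha)
  exact (real_inner_self_pos.mpr hγ₀).not_ge this

namespace IsBase

variable {Φ : Set V} {Δ : Finset V} {f : V →ₗ[ℝ] ℝ}

theorem apply_le_neg_one_or_one_le (hΦ : IsIrredRootSystem Φ) (hΔ : IsBase Φ Δ)
    (hf : ∀ a ∈ Δ, f a = 1) {γ : V} (hγ : γ ∈ Φ) : f γ ≤ -1 ∨ 1 ≤ f γ := by
  obtain ⟨c, hc, hsign⟩ := hΔ.2.2 γ hγ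
  have hfγ : f γ = ((∑ a ∈ Δ, c a : ℤ) : ℝ) := by
    rw [hc, apply_sum_smul_of_forall_eq_one hf]
    push_cast
    rfl
  have hsum : ∑ a ∈ Δ, c a ≠ 0 := by
    intro h0
    have hc0 : ∀ a ∈ Δ, c a = 0 := by
      rcases hsign with hpos | hneg
      · exact (Finset.sum_eq_zero_iff_of_nonneg hpos).mp h0
      · exact (Finset.sum_eq_zero_iff_of_nonpos hneg).mp h0
    exact hΦ.ne_zero hγ (hc ▸ Finset.sum_eq_zero fun a ha => by simp [hc0 a ha])
  rw [hfγ]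
  rcases lt_or_gt_of_ne hsum with h | h
  exacts [Or.inl (by exact_mod_cast Int.le_sub_one_of_lt h), Or.inr (by exact_mod_cast h)]

theorem mem_posRoots_of_apply_pos (hΔ : IsBase Φ Δ) (hf : ∀ a ∈ Δ, f a = 1) {γ : V}
    (hγ : γ ∈ Φ) (hpos : 0 < f γ) : γ ∈ posRoots Φ Δ := by
  obtain ⟨c, hc, hsign⟩ := hΔ.2.2 γ hγ
  rcases hsign with hnonneg | hnonpos
  · refine ⟨hγ, fun a => (c a).toNat, hc.trans (Finset.sum_congr rfl fun a ha => ?_)⟩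
    rw [← Int.cast_natCast, Int.toNat_of_nonneg (hnonneg a ha)]
  · rw [hc, apply_sum_smul_of_forall_eq_one hf] at hpos
    exact absurd hpos (Finset.sum_nonpos fun a ha => by exact_mod_cast hnonpos a ha).not_gt

end IsBase

theorem mem_simpleReflections_iff {Δ : Finset V} {t : V ≃ₗ[ℝ] V} :
    t ∈ simpleReflections Δ ↔ ∃ a ∈ Δ, t = reflectionIn a := by
  refine ⟨fun ⟨a, ha, ht⟩ => ⟨a, ha, LinearEquiv.ext fun v => by rw [ht, reflectionIn_apply]⟩, ?_⟩
  rintro ⟨a, ha, rfl⟩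
  exact ⟨a, ha, reflectionIn_apply a⟩

/-- The height `f δ`, raised by one on negative roots. Along the simple reflections it drops by at
most one on a root of minimal length: away from `±a` the height moves by a Cartan integer in
`{-1, 0, 1}` without changing sign, and at `a ↦ -a` the jump by two is absorbed by the
correction. -/
noncomputable def heightPotential (f : V →ₗ[ℝ] ℝ) (δ : V) : ℝ :=
  if f δ < 0 then f δ + 1 else f δ

section Words

variable {Φ : Set V} {Δ : Finset V} {f : V →ₗ[ℝ] ℝ}

theorem heightPotential_sub_heightPotential_reflectionIn_le_one (hΦ : IsIrredRootSystem Φ)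
    (hΔ : IsBase Φ Δ) (hf : ∀ a ∈ Δ, f a = 1) {a δ : V} (ha : a ∈ Δ) (hδ : δ ∈ Φ)
    (hle : ⟪δ, δ⟫ ≤ ⟪a, a⟫) :
    heightPotential f δ - heightPotential f (reflectionIn a δ) ≤ 1 := by
  have ha₀ := hΦ.ne_zero (hΔ.1 ha)
  by_cases h₁ : δ = a
  · subst h₁
    norm_num [heightPotential, reflectionIn_self ha₀, hf δ ha]
  by_cases h₂ : δ = -a
  · subst h₂
    norm_num [heightPotential, reflectionIn_self ha₀, hf a ha]
  obtain ⟨m, hm, hm1⟩ := hΦ.exists_int_pairing_abs_le_one hδ (hΔ.1 ha) hle h₁ h₂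
  have hfs : f (reflectionIn a δ) = f δ - m := by
    rw [reflectionIn_apply, map_sub, map_smul, hf a ha, hm, smul_eq_mul, mul_one]
  have hm' : -1 ≤ (m : ℝ) ∧ (m : ℝ) ≤ 1 := by exact_mod_cast abs_le.mp hm1
  have hδ' := hΔ.apply_le_neg_one_or_one_le hΦ hf hδ
  have hsδ' := hΔ.apply_le_neg_one_or_one_le hΦ hf (hΦ.reflectionIn_mem (hΔ.1 ha) hδ)
  unfold heightPotential
  split_ifs <;> rcases hδ' with _ | _ <;> rcases hsδ' with _ | _ <;> linarith

theorem prod_apply_mem_and_inner_self_eq (hΦ : IsIrredRootSystem Φ) (hΔ : IsBase Φ Δ)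
    {L : List (V ≃ₗ[ℝ] V)} (hL : ∀ t ∈ L, t ∈ simpleReflections Δ) {γ : V} (hγ : γ ∈ Φ) :
    L.prod γ ∈ Φ ∧ ⟪L.prod γ, L.prod γ⟫ = ⟪γ, γ⟫ := by
  induction L with
  | nil => exact ⟨hγ, rfl⟩
  | cons t L ih =>
    obtain ⟨hmem, hinner⟩ := ih fun u hu => hL u (List.mem_cons_of_mem t hu)
    obtain ⟨a, ha, rfl⟩ := mem_simpleReflections_iff.mp (hL _ List.mem_cons_self)
    rw [List.prod_cons, LinearEquiv.mul_apply, inner_reflectionIn_reflectionIn]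
    exact ⟨hΦ.reflectionIn_mem (hΔ.1 ha) hmem, hinner⟩

theorem heightPotential_sub_heightPotential_prod_le_length (hΦ : IsIrredRootSystem Φ)
    (hΔ : IsBase Φ Δ) (hf : ∀ a ∈ Δ, f a = 1) {γ : V} (hγ : γ ∈ Φ)
    (hmin : ∀ a ∈ Δ, ⟪γ, γ⟫ ≤ ⟪a, a⟫) {L : List (V ≃ₗ[ℝ] V)}
    (hL : ∀ t ∈ L, t ∈ simpleReflections Δ) :
    heightPotential f γ - heightPotential f (L.prod γ) ≤ L.length := by
  induction L with
  | nil => simp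
  | cons t L ih =>
    have hL' : ∀ u ∈ L, u ∈ simpleReflections Δ := fun u hu => hL u (List.mem_cons_of_mem t hu)
    obtain ⟨hmem, hinner⟩ := prod_apply_mem_and_inner_self_eq hΦ hΔ hL' hγ
    obtain ⟨a, ha, rfl⟩ := mem_simpleReflections_iff.mp (hL _ List.mem_cons_self)
    have hstep := heightPotential_sub_heightPotential_reflectionIn_le_one hΦ hΔ hf ha hmem
      (hinner ▸ hmin a ha)
    rw [List.prod_cons, LinearEquiv.mul_apply, List.length_cons, Nat.cast_succ]
    linarith [ih hL']

theorem two_mul_apply_sub_one_le_length (hΦ : IsIrredRootSystem Φ) (hΔ : IsBase Φ Δ)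
    (hf : ∀ a ∈ Δ, f a = 1) {γ : V} (hγ : γ ∈ posRoots Φ Δ) (hmin : ∀ a ∈ Δ, ⟪γ, γ⟫ ≤ ⟪a, a⟫)
    {L : List (V ≃ₗ[ℝ] V)} (hL : ∀ t ∈ L, t ∈ simpleReflections Δ) (hprod : L.prod γ = -γ) :
    2 * f γ - 1 ≤ L.length := by
  have hbound := heightPotential_sub_heightPotential_prod_le_length hΦ hΔ hf hγ.1 hmin hL
  obtain ⟨n, hn⟩ := exists_apply_eq_natCast_of_mem_posRoots hf hγ
  have hpos : 0 ≤ f γ := hn ▸ n.cast_nonneg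
  rcases hΔ.apply_le_neg_one_or_one_le hΦ hf hγ.1 with h | h
  · linarith
  · rw [hprod, heightPotential, heightPotential, if_neg hpos.not_gt, map_neg,
      if_pos (by linarith)] at hbound
    linarith

theorem exists_prod_eq_reflectionIn (hΦ : IsIrredRootSystem Φ) (hΔ : IsBase Φ Δ)
    (hf : ∀ a ∈ Δ, f a = 1) {γ : V} (hγ : γ ∈ posRoots Φ Δ) (hmin : ∀ a ∈ Δ, ⟪γ, γ⟫ ≤ ⟪a, a⟫) :
    ∃ L : List (V ≃ₗ[ℝ] V), (∀ t ∈ L, t ∈ simpleReflections Δ) ∧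
      (L.length : ℝ) = 2 * f γ - 1 ∧ L.prod = reflectionIn γ := by
  obtain ⟨n, hn⟩ := exists_apply_eq_natCast_of_mem_posRoots hf hγ
  induction n generalizing γ with
  | zero =>
    have := hΔ.apply_le_neg_one_or_one_le hΦ hf hγ.1
    rw [hn] at this
    norm_num at this
  | succ n ih =>
    by_cases hγΔ : γ ∈ Δ
    · refine ⟨[reflectionIn γ], ?_, ?_, List.prod_singleton⟩
      · simpa using mem_simpleReflections_iff.mpr ⟨γ, hγΔ, rfl⟩
      · rw [hf γ hγΔ]
        norm_num
    obtain ⟨a, ha, hpos⟩ := exists_mem_inner_pos_of_mem_posRoots hγ (hΦ.ne_zero hγ.1)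
    have haΦ := hΔ.1 ha
    have h₂ : γ ≠ -a := by
      rintro rfl
      rw [map_neg, hf a ha] at hn
      linarith [n.cast_nonneg (α := ℝ)]
    obtain ⟨m, hm, hm1⟩ :=
      hΦ.exists_int_pairing_abs_le_one hγ.1 haΦ (hmin a ha) (fun h => hγΔ (h ▸ ha)) h₂
    have hm₁ : (m : ℝ) = 1 := by
      have : 0 < m := by exact_mod_cast hm ▸ div_pos (by linarith) (hΦ.inner_self_pos haΦ)
      exact_mod_cast le_antisymm (abs_le.mp hm1).2 this
    have hγ'Φ := hΦ.reflectionIn_mem haΦ hγ.1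
    have hfγ' : f (reflectionIn a γ) = n := by
      rw [reflectionIn_apply, map_sub, map_smul, hm, hm₁, hf a ha, hn]
      push_cast
      ring
    have hγ' : reflectionIn a γ ∈ posRoots Φ Δ := by
      refine hΔ.mem_posRoots_of_apply_pos hf hγ'Φ ?_
      rcases hΔ.apply_le_neg_one_or_one_le hΦ hf hγ'Φ with h | h <;>
        linarith [n.cast_nonneg (α := ℝ)]
    obtain ⟨L, hL, hlen, hprod⟩ := ih hγ'
      (fun b hb => by rw [inner_reflectionIn_reflectionIn]; exact hmin b hb) hfγ'
    have ha' : reflectionIn a ∈ simpleReflections Δ := mem_simpleReflections_iff.mpr ⟨a, ha, rfl⟩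
    refine ⟨reflectionIn a :: L ++ [reflectionIn a], ?_, ?_, ?_⟩
    · simp only [List.cons_append, List.forall_mem_cons, List.forall_mem_append]
      exact ⟨ha', hL, ha', List.forall_mem_nil _⟩
    · rw [List.length_append, List.length_cons, List.length_singleton, hn]
      push_cast
      linarith
    · rw [List.cons_append, List.prod_cons, List.prod_append, List.prod_singleton, hprod,
        ← mul_assoc, reflectionIn_mul_reflectionIn_mul_reflectionIn, reflectionIn_reflectionIn]

end Words

/-- For a positive short root `β` (squared length smaller than the
maximal value `r`), the reflection `s_β` has length `l(s_β) = 2·ht(β) − 1`, where the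
height is computed by the linear functional `f` taking the value `1` on each simple
root. -/
theorem length_reflection_short (Φ : Set V) (hΦ : IsIrredRootSystem Φ)
    (Δ : Finset V) (hΔ : IsBase Φ Δ)
    (r : ℝ) (hr : IsGreatest {x : ℝ | ∃ α ∈ Φ, x = ⟪α, α⟫} r)
    (f : V →ₗ[ℝ] ℝ) (hf : ∀ a ∈ Δ, f a = 1)
    (β : V) (hβ : β ∈ posRoots Φ Δ) (hβsh : ⟪β, β⟫ ≠ r)
    (s : V ≃ₗ[ℝ] V) (hs : ∀ v, s v = v - (2 * ⟪β, v⟫ / ⟪β, β⟫) • β) :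
    (len Δ s : ℝ) = 2 * f β - 1 := by
  have hs' : s = reflectionIn β := LinearEquiv.ext fun v => by rw [hs, reflectionIn_apply]
  have hmin : ∀ a ∈ Δ, ⟪β, β⟫ ≤ ⟪a, a⟫ := fun a ha =>
    hΦ.inner_self_le_of_ne_isGreatest hr hβ.1 hβsh (hΔ.1 ha)
  obtain ⟨L₀, hL₀, hlen₀, hprod₀⟩ := exists_prod_eq_reflectionIn hΦ hΔ hf hβ hmin
  set S : Set ℕ := {n | ∃ L : List (V ≃ₗ[ℝ] V),
    (∀ t ∈ L, t ∈ simpleReflections Δ) ∧ L.length = n ∧ L.prod = s}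
  have hS : L₀.length ∈ S := ⟨L₀, hL₀, rfl, hs' ▸ hprod₀⟩
  have hle : (len Δ s : ℝ) ≤ L₀.length := by exact_mod_cast Nat.sInf_le hS
  obtain ⟨L, hL, hlen, hprod⟩ := Nat.sInf_mem ⟨_, hS⟩
  have hge : 2 * f β - 1 ≤ L.length := two_mul_apply_sub_one_le_length hΦ hΔ hf hβ hmin hL
    (by rw [hprod, hs', reflectionIn_self (hΦ.ne_zero hβ.1)])
  exact le_antisymm (hlen₀ ▸ hle) (hlen ▸ hge :)
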